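/- Let q, a, x, u, y ∈ ℂ with 0 < |q| < 1, |u| ≤ 1, |a y| < 1, x ≠ 0, and 1 - a q^j x ≠ 0 for all j ≥ 0, and let n ∈ ℕ. Then T(y D_q|u) applied to the function t ↦ t^n/(a t;q)_n, evaluated at x, equals (1/(a x;q)_n) · ∑_{i=0}^{n} [n choose i]_q u^{C(i,2)} ((a x;q)_i/(a q^n x;q)_i) x^{n-i} y^i · ∑_{m=0}^{∞} u^{C(m,2)} (q^n;q)_m (u^i a y)^m / ((q;q)_m (a q^{n+i} x;q)_m), all series converging absolutely. -/

import Mathlib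

/-- The finite q-shifted factorial (a;q)_n = ∏_{j=0}^{n-1} (1 - a q^j). -/
noncomputable def qPoch (q a : ℂ) (n : ℕ) : ℂ :=
  ∏ j ∈ Finset.range n, (1 - a * q ^ j)

/-- The q-binomial coefficient [n choose k]_q = (q;q)_n / ((q;q)_k (q;q)_{n-k}). -/
noncomputable def qBinom (q : ℂ) (n k : ℕ) : ℂ :=
  qPoch q q n / (qPoch q q k * qPoch q q (n - k))

/-- The q-differential operator: (D_q f)(x) = (f(x) - f(qx))/x. -/
noncomputable def Dq (q : ℂ) (f : ℂ → ℂ) : ℂ → ℂ :=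
  fun x => (f x - f (q * x)) / x

/-- The deformed q-exponential operator:
T(y D_q|u) f(x) = ∑_{m≥0} u^{C(m,2)} (y^m/(q;q)_m) (D_q^m f)(x). -/
noncomputable def Tq (q u y : ℂ) (f : ℂ → ℂ) (x : ℂ) : ℂ :=
  ∑' m : ℕ, u ^ (m.choose 2) * (y ^ m / qPoch q q m) * ((Dq q)^[m] f x)

/-! The q-Leibniz rule
`D_q^M (f g)(x) / (q;q)_M = ∑_{i+k=M} D_q^i f(x) / (q;q)_i · D_q^k g(q^i x) / (q;q)_k`,
together with `u^C(i+k,2) = u^C(i,2) u^C(k,2) u^(ik)`, turns the operator series for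
`f g = t^n · (a t;q)_n⁻¹` into a double series indexed by `(i, k)`. Both factors have closed
q-derivatives: `D_q^i t^n` vanishes for `i > n`, and
`D_q^k (a t;q)_n⁻¹ = a^k (q^n;q)_k / (a t;q)_{n+k}`.
So only the rows `i ≤ n` survive; each is a constant times a series whose term ratio is eventually
of size at most `|a y| < 1`, and summing row by row gives the right-hand side. -/

open Finset Filter Topology

lemma qPoch_succ (q b : ℂ) (N : ℕ) : qPoch q b (N + 1) = qPoch q b N * (1 - b * q ^ N) :=
  prod_range_succ _ _

lemma qPoch_succ' (q b : ℂ) (N : ℕ) : qPoch q b (N + 1) = (1 - b) * qPoch q (b * q) N := by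
  simp only [qPoch, prod_range_succ', pow_succ', pow_zero, mul_one, mul_assoc]
  exact mul_comm _ _

lemma qPoch_add (q b : ℂ) (m k : ℕ) : qPoch q b (m + k) = qPoch q b m * qPoch q (b * q ^ m) k := by
  simp only [qPoch, prod_range_add, pow_add, mul_assoc]

lemma pow_succ_ne_one_of_norm_lt_one {𝕜 : Type*} [NormedDivisionRing 𝕜] {q : 𝕜} (hq : ‖q‖ < 1)
    (m : ℕ) : q ^ (m + 1) ≠ 1 := fun h => by
  have := pow_lt_one₀ (norm_nonneg q) hq m.succ_ne_zero
  rw [← norm_pow, h, norm_one] at this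
  exact lt_irrefl _ this

lemma qPoch_self_ne_zero {q : ℂ} (hq : ∀ m : ℕ, q ^ (m + 1) ≠ 1) (m : ℕ) : qPoch q q m ≠ 0 :=
  prod_ne_zero_iff.mpr fun j _ => by rw [← pow_succ', sub_ne_zero]; exact (hq j).symm

lemma prod_one_sub_pow_mul_qPoch (q : ℂ) {n i : ℕ} (hi : i ≤ n) :
    (∏ j ∈ range i, (1 - q ^ (n - j))) * qPoch q q (n - i) = qPoch q q n := by
  induction i with
  | zero => simp
  | succ i ih =>
    obtain ⟨m, hm⟩ : ∃ m, n - i = m + 1 := ⟨n - (i + 1), by omega⟩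
    rw [← ih (by omega), prod_range_succ, hm, qPoch_succ, ← pow_succ',
      show n - (i + 1) = m by omega]
    ring

lemma inv_qPoch_sub_inv_qPoch {q b : ℂ} {N : ℕ} (h : qPoch q b (N + 1) ≠ 0) :
    (qPoch q b N)⁻¹ - (qPoch q (b * q) N)⁻¹ = b * (1 - q ^ N) / qPoch q b (N + 1) := by
  have h₁ := qPoch_succ q b N
  have h₂ := qPoch_succ' q b N
  have hb : qPoch q b N ≠ 0 := left_ne_zero_of_mul (h₁ ▸ h)
  have hbq : qPoch q (b * q) N ≠ 0 := right_ne_zero_of_mul (h₂ ▸ h)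
  rw [inv_sub_inv hb hbq, div_eq_div_iff (mul_ne_zero hb hbq) h]
  linear_combination qPoch q (b * q) N * h₁ - qPoch q b N * h₂

lemma Dq_sum {ι : Type*} (q : ℂ) (s : Finset ι) (φ : ι → ℂ → ℂ) (x : ℂ) :
    Dq q (fun z => ∑ p ∈ s, φ p z) x = ∑ p ∈ s, Dq q (φ p) x := by
  simp only [Dq, ← sum_sub_distrib, sum_div]

lemma Dq_mul (q : ℂ) (φ ψ : ℂ → ℂ) (x : ℂ) :
    Dq q (fun z => φ z * ψ z) x = Dq q φ x * ψ (q * x) + φ x * Dq q ψ x := by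
  simp only [Dq]; ring

lemma Dq_comp_const_mul (q c : ℂ) (ψ : ℂ → ℂ) (x : ℂ) :
    Dq q (fun z => ψ (c * z)) x = c * Dq q ψ (c * x) := by
  rcases eq_or_ne c 0 with rfl | hc
  · simp [Dq]
  · rw [Dq, Dq, mul_div_assoc', mul_div_mul_left _ _ hc, mul_left_comm]

noncomputable def dividedDq (q : ℂ) (m : ℕ) (f : ℂ → ℂ) (x : ℂ) : ℂ :=
  (Dq q)^[m] f x / qPoch q q m

lemma Dq_dividedDq {q : ℂ} (hq : ∀ m : ℕ, q ^ (m + 1) ≠ 1) (m : ℕ) (f : ℂ → ℂ) (x : ℂ) :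
    Dq q (dividedDq q m f) x = (1 - q ^ (m + 1)) * dividedDq q (m + 1) f x := by
  have h₁ : 1 - q * q ^ m ≠ 0 := by rw [← pow_succ']; exact sub_ne_zero.mpr (hq m).symm
  have h₂ := qPoch_self_ne_zero hq m
  simp only [dividedDq, Function.iterate_succ_apply', Dq, qPoch_succ, pow_succ']
  field_simp

/-- The q-Pascal rule `1 - q^(i+k) = (1 - q^i) + q^i (1 - q^k)`, summed over an antidiagonal. -/
lemma sum_antidiagonal_succ_qPascal (q : ℂ) (C : ℕ → ℕ → ℂ) (M : ℕ) :
    ∑ p ∈ antidiagonal M, ((1 - q ^ (p.1 + 1)) * C (p.1 + 1) p.2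
      + q ^ p.1 * (1 - q ^ (p.2 + 1)) * C p.1 (p.2 + 1)) =
    (1 - q ^ (M + 1)) * ∑ p ∈ antidiagonal (M + 1), C p.1 p.2 := by
  have split : ∀ p ∈ antidiagonal (M + 1), (1 - q ^ (M + 1)) * C p.1 p.2 =
      (1 - q ^ p.1) * C p.1 p.2 + q ^ p.1 * (1 - q ^ p.2) * C p.1 p.2 := by
    intro p hp
    rw [← mem_antidiagonal.mp hp, pow_add]
    ring
  rw [mul_sum, sum_congr rfl split, sum_add_distrib, sum_add_distrib, Nat.sum_antidiagonal_succ,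
    Nat.sum_antidiagonal_succ']
  simp

theorem dividedDq_mul {q : ℂ} (hq : ∀ m : ℕ, q ^ (m + 1) ≠ 1) (f g : ℂ → ℂ) (M : ℕ) (x : ℂ) :
    dividedDq q M (fun t => f t * g t) x =
      ∑ p ∈ antidiagonal M, dividedDq q p.1 f x * dividedDq q p.2 g (q ^ p.1 * x) := by
  induction M generalizing x with
  | zero => simp [dividedDq, qPoch]
  | succ M ih =>
    have pascal := sum_antidiagonal_succ_qPascal q
      (fun i k => dividedDq q i f x * dividedDq q k g (q ^ i * x)) M
    refine mul_left_cancel₀ (sub_ne_zero.mpr (hq M).symm) ?_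
    rw [← pascal, ← Dq_dividedDq hq, funext ih, Dq_sum]
    refine sum_congr rfl fun p _ => ?_
    rw [Dq_mul, Dq_comp_const_mul, Dq_dividedDq hq, Dq_dividedDq hq,
      show q ^ p.1 * (q * x) = q ^ (p.1 + 1) * x by ring]
    ring

-- For `i > n` the factor `j = n` is `1 - q ^ 0 = 0`, so the truncated exponents are harmless.
lemma Dq_iterate_pow {q x : ℂ} (hq : q ≠ 0) (hx : x ≠ 0) (n i : ℕ) :
    (Dq q)^[i] (fun t => t ^ n) x = (∏ j ∈ range i, (1 - q ^ (n - j))) * x ^ (n - i) := by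
  induction i generalizing x with
  | zero => simp
  | succ i ih =>
    rw [Function.iterate_succ_apply', Dq, ih hx, ih (mul_ne_zero hq hx), prod_range_succ]
    rcases Nat.eq_zero_or_pos (n - i) with h0 | hpos
    · simp [h0]
    · obtain ⟨m, hm⟩ : ∃ m, n - i = m + 1 := ⟨n - i - 1, by omega⟩
      rw [hm, show n - (i + 1) = m by omega]
      field_simp
      ring

lemma dividedDq_pow_of_le {q x : ℂ} (hq₀ : q ≠ 0) (hq : ∀ m : ℕ, q ^ (m + 1) ≠ 1) (hx : x ≠ 0)
    {n i : ℕ} (hi : i ≤ n) :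
    dividedDq q i (fun t => t ^ n) x = qBinom q n i * x ^ (n - i) := by
  have := qPoch_self_ne_zero hq (n - i)
  rw [dividedDq, Dq_iterate_pow hq₀ hx, qBinom, ← prod_one_sub_pow_mul_qPoch q hi]
  field_simp

lemma dividedDq_pow_of_lt {q x : ℂ} (hq : q ≠ 0) (hx : x ≠ 0) {n i : ℕ} (hi : n < i) :
    dividedDq q i (fun t => t ^ n) x = 0 := by
  rw [dividedDq, Dq_iterate_pow hq hx, prod_eq_zero (mem_range.mpr hi) (by simp)]
  simp

lemma Dq_iterate_inv_qPoch {q a x : ℂ} (hq : q ≠ 0) (hx : x ≠ 0)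
    (h : ∀ j, qPoch q (a * x) j ≠ 0) (n k : ℕ) :
    (Dq q)^[k] (fun t => (qPoch q (a * t) n)⁻¹) x =
      a ^ k * qPoch q (q ^ n) k / qPoch q (a * x) (n + k) := by
  induction k generalizing x with
  | zero => simp [qPoch]
  | succ k ih =>
    have hqx : ∀ j, qPoch q (a * (q * x)) j ≠ 0 := fun j => by
      have := h (j + 1)
      rw [qPoch_succ', mul_right_comm, mul_assoc a] at this
      exact right_ne_zero_of_mul this
    rw [Function.iterate_succ_apply', Dq, ih hx h, ih (mul_ne_zero hq hx) hqx]
    simp only [div_eq_mul_inv]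
    rw [← mul_sub, ← mul_assoc a q, mul_right_comm a q, inv_qPoch_sub_inv_qPoch (h _),
      qPoch_succ q (q ^ n), ← pow_add, ← add_assoc]
    field_simp
    ring

lemma dividedDq_inv_qPoch {q a x : ℂ} (hq : q ≠ 0) (hx : x ≠ 0)
    (h : ∀ j, qPoch q (a * x) j ≠ 0) (n k : ℕ) :
    dividedDq q k (fun t => (qPoch q (a * t) n)⁻¹) x =
      a ^ k * qPoch q (q ^ n) k / (qPoch q q k * qPoch q (a * x) (n + k)) := by
  rw [dividedDq, Dq_iterate_inv_qPoch hq hx h, div_div, mul_comm (qPoch q q k)]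

lemma choose_two_add (i k : ℕ) : (i + k).choose 2 = i.choose 2 + k.choose 2 + i * k := by
  induction k with
  | zero => simp
  | succ k ih =>
    rw [← add_assoc, Nat.choose_succ_succ', Nat.choose_succ_succ' k, ih, Nat.choose_one_right,
      Nat.choose_one_right]
    ring

lemma Tq_term_mul {q : ℂ} (hq : ∀ m : ℕ, q ^ (m + 1) ≠ 1) (u y : ℂ) (f g : ℂ → ℂ) (M : ℕ)
    (x : ℂ) :
    u ^ M.choose 2 * (y ^ M / qPoch q q M) * (Dq q)^[M] (fun t => f t * g t) x =
      ∑ p ∈ antidiagonal M, u ^ p.1.choose 2 * y ^ p.1 * dividedDq q p.1 f x *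
        (u ^ p.2.choose 2 * (u ^ p.1 * y) ^ p.2 * dividedDq q p.2 g (q ^ p.1 * x)) := by
  rw [mul_div_assoc', div_mul_eq_mul_div, mul_div_assoc, ← dividedDq, dividedDq_mul hq, mul_sum]
  refine sum_congr rfl fun p hp => ?_
  rw [← mem_antidiagonal.mp hp, choose_two_add, pow_add, pow_add, pow_add, mul_pow, ← pow_mul]
  ring

lemma summable_choose_two_qPoch {q u b c z : ℂ} (hq : ‖q‖ < 1) (hu : ‖u‖ ≤ 1) (hz : ‖z‖ < 1) :
    Summable fun m : ℕ => u ^ m.choose 2 * qPoch q b m * z ^ m / (qPoch q q m * qPoch q c m) := by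
  set t := fun m : ℕ => u ^ m.choose 2 * qPoch q b m * z ^ m / (qPoch q q m * qPoch q c m)
  set ρ : ℕ → ℂ := fun m => (1 - b * q ^ m) * z / ((1 - q * q ^ m) * (1 - c * q ^ m))
  have hstep : ∀ m, t (m + 1) = u ^ m * ρ m * t m := fun m => by
    simp only [t, ρ, qPoch_succ, Nat.choose_succ_succ', Nat.choose_one_right, div_eq_mul_inv,
      mul_inv, pow_add, pow_succ]
    ring
  have hρ : Tendsto ρ atTop (𝓝 z) := by
    have hqm := tendsto_pow_atTop_nhds_zero_of_norm_lt_one hq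
    have := (((hqm.const_mul b).const_sub 1).mul_const z).div
      (((hqm.const_mul q).const_sub 1).mul ((hqm.const_mul c).const_sub 1)) (by simp)
    simp only [mul_zero, sub_zero, one_mul, div_one] at this
    exact this
  obtain ⟨r, hzr, hr⟩ := exists_between hz
  refine summable_of_ratio_norm_eventually_le hr ?_
  filter_upwards [hρ.norm.eventually (gt_mem_nhds hzr)] with m hm
  rw [hstep, norm_mul, norm_mul, norm_pow]
  calc ‖u‖ ^ m * ‖ρ m‖ * ‖t m‖ ≤ 1 * r * ‖t m‖ := by
        gcongr
        exact pow_le_one₀ (norm_nonneg u) hu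
    _ = r * ‖t m‖ := by rw [one_mul]

lemma HasSum.sum_antidiagonal {α : Type*} [AddCommMonoid α] [TopologicalSpace α]
    [ContinuousAdd α] [RegularSpace α] {F : ℕ × ℕ → α} {s : α} (h : HasSum F s) :
    HasSum (fun M => ∑ p ∈ antidiagonal M, F p) s := by
  have h' := HasAntidiagonal.sigmaAntidiagonalEquivProd.hasSum_iff.mpr h
  exact h'.sigma fun M => Finset.hasSum (antidiagonal M) F

lemma hasSum_prod_of_hasSum_rows {ι κ α : Type*} [DecidableEq ι] [AddCommMonoid α]
    [TopologicalSpace α] [ContinuousAdd α] {F : ι × κ → α} {s : Finset ι} {a : ι → α}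
    (hF : ∀ p : ι × κ, p.1 ∉ s → F p = 0) (h : ∀ i ∈ s, HasSum (fun k => F (i, k)) (a i)) :
    HasSum F (∑ i ∈ s, a i) := by
  have hrow : ∀ i ∈ s, HasSum (fun p : ι × κ => if p.1 = i then F p else 0) (a i) := by
    intro i hi
    rw [← (Prod.mk_right_injective i).hasSum_iff]
    · simpa [Function.comp_def] using h i hi
    · rintro ⟨j, k⟩ hjk
      rw [if_neg]
      rintro rfl
      exact hjk ⟨k, rfl⟩
  convert hasSum_sum hrow using 1
  funext p
  rw [sum_ite_eq s p.1 fun _ => F p]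
  split_ifs with hp
  · rfl
  · exact hF p hp

lemma summand_pow_mul_inv_qPoch_eq {q a x u y : ℂ} (hq₀ : q ≠ 0) (hq : ∀ m : ℕ, q ^ (m + 1) ≠ 1)
    (hx : x ≠ 0) (h : ∀ j : ℕ, 1 - a * q ^ j * x ≠ 0) {n i : ℕ} (hi : i ≤ n) (k : ℕ) :
    u ^ i.choose 2 * y ^ i * dividedDq q i (fun t => t ^ n) x *
      (u ^ k.choose 2 * (u ^ i * y) ^ k *
        dividedDq q k (fun t => (qPoch q (a * t) n)⁻¹) (q ^ i * x)) =
    1 / qPoch q (a * x) n *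
      (qBinom q n i * u ^ i.choose 2 * (qPoch q (a * x) i / qPoch q (a * q ^ n * x) i) *
        x ^ (n - i) * y ^ i *
        (u ^ k.choose 2 * qPoch q (q ^ n) k * (u ^ i * a * y) ^ k /
          (qPoch q q k * qPoch q (a * q ^ (n + i) * x) k))) := by
  have hP : ∀ s j, qPoch q (a * q ^ s * x) j ≠ 0 := fun s j =>
    prod_ne_zero_iff.mpr fun l _ => by
      rw [show a * q ^ s * x * q ^ l = a * q ^ (s + l) * x by ring]
      exact h _
  have hP₀ : ∀ j, qPoch q (a * x) j ≠ 0 := fun j => by simpa using hP 0 j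
  have split : qPoch q (a * (q ^ i * x)) (n + k) =
      qPoch q (a * x) n * qPoch q (a * q ^ n * x) i * qPoch q (a * q ^ (n + i) * x) k /
        qPoch q (a * x) i := by
    rw [eq_div_iff (hP₀ i), show a * (q ^ i * x) = a * x * q ^ i by ring, mul_comm, ← qPoch_add,
      show i + (n + k) = n + i + k by ring, qPoch_add, qPoch_add, mul_assoc a x, mul_assoc a x,
      mul_comm x, mul_comm x, ← mul_assoc, ← mul_assoc]
  rw [dividedDq_pow_of_le hq₀ hq hx hi,
    dividedDq_inv_qPoch hq₀ (mul_ne_zero (pow_ne_zero _ hq₀) hx)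
      (fun j => by simpa [mul_assoc] using hP i j), split]
  simp only [div_eq_mul_inv, mul_inv, inv_inv, one_mul]
  ring

theorem stmt11 (q a x u y : ℂ) (n : ℕ)
    (hq0 : 0 < ‖q‖) (hq1 : ‖q‖ < 1)
    (hu : ‖u‖ ≤ 1) (hay : ‖a * y‖ < 1) (hx : x ≠ 0)
    (h : ∀ j : ℕ, 1 - a * q ^ j * x ≠ 0) :
    (Summable fun m : ℕ =>
        u ^ (m.choose 2) * (y ^ m / qPoch q q m) *
          ((Dq q)^[m] (fun t => t ^ n / qPoch q (a * t) n) x)) ∧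
    (∀ i : ℕ, i ≤ n →
      Summable fun m : ℕ =>
        u ^ (m.choose 2) * qPoch q (q ^ n) m * (u ^ i * a * y) ^ m /
          (qPoch q q m * qPoch q (a * q ^ (n + i) * x) m)) ∧
    Tq q u y (fun t => t ^ n / qPoch q (a * t) n) x =
      1 / qPoch q (a * x) n *
        ∑ i ∈ Finset.range (n + 1),
          qBinom q n i * u ^ (i.choose 2) *
            (qPoch q (a * x) i / qPoch q (a * q ^ n * x) i) * x ^ (n - i) * y ^ i *
            ∑' m : ℕ,
              u ^ (m.choose 2) * qPoch q (q ^ n) m * (u ^ i * a * y) ^ m /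
                (qPoch q q m * qPoch q (a * q ^ (n + i) * x) m) := by
  have hq₀ : q ≠ 0 := norm_pos_iff.mp hq0
  have hq := pow_succ_ne_one_of_norm_lt_one hq1
  have hinner : ∀ i : ℕ, Summable fun m : ℕ =>
      u ^ (m.choose 2) * qPoch q (q ^ n) m * (u ^ i * a * y) ^ m /
        (qPoch q q m * qPoch q (a * q ^ (n + i) * x) m) := fun i =>
    summable_choose_two_qPoch hq1 hu <| by
      rw [mul_assoc, norm_mul, norm_pow]
      exact (mul_le_of_le_one_left (norm_nonneg _) (pow_le_one₀ (norm_nonneg u) hu)).trans_lt hay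
  set F : ℕ × ℕ → ℂ := fun p =>
    u ^ p.1.choose 2 * y ^ p.1 * dividedDq q p.1 (fun t => t ^ n) x *
      (u ^ p.2.choose 2 * (u ^ p.1 * y) ^ p.2 *
        dividedDq q p.2 (fun t => (qPoch q (a * t) n)⁻¹) (q ^ p.1 * x))
  have hrows : ∀ i ∈ range (n + 1), HasSum (fun k => F (i, k)) (1 / qPoch q (a * x) n *
      (qBinom q n i * u ^ (i.choose 2) *
        (qPoch q (a * x) i / qPoch q (a * q ^ n * x) i) * x ^ (n - i) * y ^ i *
        ∑' m : ℕ, u ^ (m.choose 2) * qPoch q (q ^ n) m * (u ^ i * a * y) ^ m /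
          (qPoch q q m * qPoch q (a * q ^ (n + i) * x) m))) := fun i hi => by
    simp only [F, summand_pow_mul_inv_qPoch_eq hq₀ hq hx h (mem_range_succ_iff.mp hi)]
    exact ((hinner i).hasSum.mul_left _).mul_left _
  have hzero : ∀ p : ℕ × ℕ, p.1 ∉ range (n + 1) → F p = 0 := fun p hp => by
    simp only [F, dividedDq_pow_of_lt hq₀ hx (by simpa using hp), mul_zero, zero_mul]
  have hT := (hasSum_prod_of_hasSum_rows hzero hrows).sum_antidiagonal
  simp only [F, ← Tq_term_mul hq, ← mul_sum, ← div_eq_mul_inv] at hT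
  exact ⟨hT.summable, fun i _ => hinner i, hT.tsum_eq⟩
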